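/- arXiv:2206.14251 — 5 statements merged into one kernel-verified Lean document; each statement's English description precedes it below -/
import Mathlib

section
/- Let π₁ and π₂ be unitary representations of a countable group Γ on Hilbert spaces H₁ and H₂, and let S be a finite symmetric subset of Γ. Write M(π) = (1/|S|)∑_{s∈S} π(s). If π₁ admits almost invariant vectors (i.e., for every ε > 0 there is a unit vector u with ⟨π₁(s)u, u⟩ ≥ 1 − ε for all s ∈ S), then ‖M(π₁ ⊗ π₂)‖ ≥ ‖M(π₂)‖. -/
open scoped RealInnerProductSpace

/-- If `π₁` admits almost invariant vectors (w.r.t. the finite symmetric set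
`S`), then the Markov averaging operator of the tensor product representation `π₁ ⊗ π₂`
has norm at least that of the averaging operator of `π₂`.  The tensor product
representation is axiomatized by a bilinear map `t : H₁ → H₂ → H₁₂` satisfying
`⟪t u v, t u' v'⟫ = ⟪u,u'⟫⟪v,v'⟫` and the equivariance `π₁₂(g)(t u v) = t (π₁(g)u) (π₂(g)v)`. -/
theorem norm_averaging_tensor_ge_of_almost_invariant_vectors
    {Γ : Type*} [Group Γ] [Countable Γ]
    {H₁ H₂ H₁₂ : Type*}
    [NormedAddCommGroup H₁] [InnerProductSpace ℝ H₁] [CompleteSpace H₁]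
    [NormedAddCommGroup H₂] [InnerProductSpace ℝ H₂] [CompleteSpace H₂]
    [NormedAddCommGroup H₁₂] [InnerProductSpace ℝ H₁₂] [CompleteSpace H₁₂]
    (π₁ : Γ →* (H₁ →L[ℝ] H₁)) (hπ₁ : ∀ g x, ‖π₁ g x‖ = ‖x‖)
    (π₂ : Γ →* (H₂ →L[ℝ] H₂)) (hπ₂ : ∀ g x, ‖π₂ g x‖ = ‖x‖)
    (π₁₂ : Γ →* (H₁₂ →L[ℝ] H₁₂)) (hπ₁₂ : ∀ g x, ‖π₁₂ g x‖ = ‖x‖)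
    (S : Finset Γ) (hSne : S.Nonempty) (hSsym : ∀ s ∈ S, s⁻¹ ∈ S)
    (t : H₁ →ₗ[ℝ] H₂ →ₗ[ℝ] H₁₂)
    (htinner : ∀ (u u' : H₁) (v v' : H₂), ⟪t u v, t u' v'⟫ = ⟪u, u'⟫ * ⟪v, v'⟫)
    (hteq : ∀ (g : Γ) (u : H₁) (v : H₂), π₁₂ g (t u v) = t (π₁ g u) (π₂ g v))
    (hai : ∀ ε : ℝ, 0 < ε → ∃ u : H₁, ‖u‖ = 1 ∧ ∀ s ∈ S, (1 : ℝ) - ε ≤ ⟪π₁ s u, u⟫) :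
    ‖(S.card : ℝ)⁻¹ • ∑ s ∈ S, π₂ s‖ ≤ ‖(S.card : ℝ)⁻¹ • ∑ s ∈ S, π₁₂ s‖ := by

  have ht : ∀ (a : H₁) (b : H₂), ‖t a b‖ = ‖a‖ * ‖b‖ := by
    intro a b
    have h := htinner a a b b
    rw [real_inner_self_eq_norm_sq, real_inner_self_eq_norm_sq,
      real_inner_self_eq_norm_sq] at h
    have h1 : ‖t a b‖ ^ 2 = (‖a‖ * ‖b‖) ^ 2 := by rw [h]; ring
    nlinarith [norm_nonneg (t a b), norm_nonneg a, norm_nonneg b,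
      mul_nonneg (norm_nonneg a) (norm_nonneg b)]
  have hcard : (0:ℝ) < S.card := by exact_mod_cast hSne.card_pos
  refine le_of_forall_pos_le_add fun ε hε => ?_
  obtain ⟨u, hu, hau⟩ := hai ε hε
  set M : H₁₂ →L[ℝ] H₁₂ := (S.card : ℝ)⁻¹ • ∑ s ∈ S, π₁₂ s with hM
  refine ContinuousLinearMap.opNorm_le_bound _ (by positivity) fun v => ?_
  set w : H₂ := ((S.card : ℝ)⁻¹ • ∑ s ∈ S, π₂ s) v with hwdef
  by_cases hv0 : w = 0
  · rw [hv0, norm_zero]; positivity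
  have hwpos : 0 < ‖w‖ := norm_pos_iff.mpr hv0
  have key : ⟪M (t u v), t u w⟫ = (S.card : ℝ)⁻¹ * ∑ s ∈ S, ⟪π₁ s u, u⟫ * ⟪π₂ s v, w⟫ := by
    rw [hM]
    simp only [ContinuousLinearMap.smul_apply, ContinuousLinearMap.sum_apply,
      real_inner_smul_left, sum_inner, hteq, htinner]
  have hww : ⟪w, w⟫ = (S.card : ℝ)⁻¹ * ∑ s ∈ S, ⟪π₂ s v, w⟫ := by
    nth_rewrite 1 [hwdef]
    rw [ContinuousLinearMap.smul_apply, real_inner_smul_left,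
      ContinuousLinearMap.sum_apply, sum_inner]
  -- per-term bound
  have hterm : ∀ s ∈ S, ⟪π₂ s v, w⟫ - ε * (‖v‖ * ‖w‖) ≤ ⟪π₁ s u, u⟫ * ⟪π₂ s v, w⟫ := by
    intro s hs
    have hc1 : ⟪π₁ s u, u⟫ ≤ 1 := by
      have := real_inner_le_norm (π₁ s u) u
      rwa [hπ₁, hu, one_mul] at this
    have hc2 : 1 - ε ≤ ⟪π₁ s u, u⟫ := hau s hs
    have hd : |⟪π₂ s v, w⟫| ≤ ‖v‖ * ‖w‖ := by
      have := abs_real_inner_le_norm (π₂ s v) w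
      rwa [hπ₂] at this
    obtain ⟨hd2, hd1⟩ := abs_le.mp hd
    nlinarith [mul_nonneg (sub_nonneg.2 hc1) (sub_nonneg.2 hd1),
      mul_nonneg (sub_nonneg.2 hc1) (sub_nonneg.2 hd2),
      mul_nonneg (sub_nonneg.2 hc2) (sub_nonneg.2 hd1)]
  have hsum : (∑ s ∈ S, ⟪π₂ s v, w⟫) - S.card * (ε * (‖v‖ * ‖w‖)) ≤
      ∑ s ∈ S, ⟪π₁ s u, u⟫ * ⟪π₂ s v, w⟫ := by
    have := Finset.sum_le_sum hterm
    rw [Finset.sum_sub_distrib, Finset.sum_const, nsmul_eq_mul] at this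
    linarith
  have hinv : (0:ℝ) ≤ (S.card : ℝ)⁻¹ := by positivity
  have h1 : ‖w‖ ^ 2 - ε * (‖v‖ * ‖w‖) ≤ ⟪M (t u v), t u w⟫ := by
    rw [key]
    have h2 := mul_le_mul_of_nonneg_left hsum hinv
    rw [mul_sub, ← hww, real_inner_self_eq_norm_sq] at h2
    have hc : (S.card : ℝ)⁻¹ * ((S.card : ℝ) * (ε * (‖v‖ * ‖w‖))) = ε * (‖v‖ * ‖w‖) := by
      field_simp
    linarith [h2, hc.le, hc.ge]
  have h2 : ⟪M (t u v), t u w⟫ ≤ ‖M‖ * (‖v‖ * ‖w‖) := by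
    calc ⟪M (t u v), t u w⟫ ≤ ‖M (t u v)‖ * ‖t u w‖ := real_inner_le_norm _ _
      _ ≤ (‖M‖ * ‖t u v‖) * ‖t u w‖ :=
          mul_le_mul_of_nonneg_right (M.le_opNorm _) (norm_nonneg _)
      _ = ‖M‖ * (‖v‖ * ‖w‖) := by rw [ht, ht, hu]; ring
  have hfin : ‖w‖ ^ 2 ≤ (‖M‖ + ε) * ‖v‖ * ‖w‖ := by nlinarith
  have : ‖w‖ * ‖w‖ ≤ ((‖M‖ + ε) * ‖v‖) * ‖w‖ := by nlinarith
  exact le_of_mul_le_mul_right this hwpos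
end

section
/- Let Γ = F₂^{⊕ℤ} ⋊ ℤ where ℤ acts by shifting coordinates, and for E ⊆ ℤ let H_E = F₂^{⊕E} ≤ Γ. If C ⊆ ℤ contains arbitrarily long intervals, then H_C is co-amenable in Γ (with respect to the generating set S = {s^{±1}, a^{±1}, b^{±1}} where a, b generate the F₂ factor at coordinate 0 and s generates ℤ). -/
open scoped Pointwise

/-- The free group on two generators. -/
abbrev F2 := FreeGroup (Fin 2)

/-- The restricted direct product `F₂^{⊕ℤ}`, as the subgroup of finitely supported
elements of `∏_{i∈ℤ} F₂`. -/
def Gsupp : Subgroup (ℤ → F2) where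
  carrier := {f | {i : ℤ | f i ≠ 1}.Finite}
  one_mem' := by simp
  mul_mem' := by
    intro f g hf hg
    refine (hf.union hg).subset fun i hi => ?_
    by_contra h
    simp only [Set.mem_union, Set.mem_setOf_eq, not_or, not_not] at h
    exact hi (by simp [Pi.mul_apply, h.1, h.2])
  inv_mem' := by
    intro f hf
    refine hf.subset fun i hi => ?_
    simp only [Set.mem_setOf_eq, Pi.inv_apply] at hi ⊢
    intro h
    exact hi (by simp [h])

/-- The shift automorphism of `∏_{i∈ℤ} F₂` by `n`. -/
def shiftPi (n : ℤ) : (ℤ → F2) ≃* (ℤ → F2) where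
  toFun f := fun i => f (i - n)
  invFun f := fun i => f (i + n)
  left_inv f := by ext i; simp
  right_inv f := by ext i; simp
  map_mul' f g := rfl

/-- The shift automorphism of `F₂^{⊕ℤ}` by `n`. -/
def shiftG (n : ℤ) : Gsupp ≃* Gsupp where
  toFun f := ⟨shiftPi n f, by
    refine ((f.2.image (· + n)).subset fun i hi => ?_)
    exact ⟨i - n, hi, by ring⟩⟩
  invFun f := ⟨shiftPi (-n) f, by
    refine ((f.2.image (· + -n)).subset fun i hi => ?_)
    exact ⟨i - -n, by simpa [shiftPi] using hi, by ring⟩⟩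
  left_inv f := by
    ext i
    simp [shiftPi]
  right_inv f := by
    ext i
    simp [shiftPi]
  map_mul' f g := rfl

/-- The shift action of `ℤ` on `F₂^{⊕ℤ}` as a homomorphism into the automorphism
group. -/
def shiftHom : Multiplicative ℤ →* MulAut ↥Gsupp where
  toFun n := shiftG (Multiplicative.toAdd n)
  map_one' := by
    ext f i
    simp [shiftG, shiftPi]
  map_mul' m n := by
    ext f i
    simp [shiftG, shiftPi, sub_sub]

/-- The wreath-type product `Γ = F₂^{⊕ℤ} ⋊ ℤ`. -/
abbrev WGamma := Gsupp ⋊[shiftHom] Multiplicative ℤ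

/-- The element of `F₂^{⊕ℤ}` equal to `w` in coordinate `0` and trivial elsewhere. -/
def delta0 (w : F2) : Gsupp :=
  ⟨fun i => if i = 0 then w else 1, by
    refine (Set.finite_singleton (0 : ℤ)).subset fun i hi => ?_
    by_contra h
    simp only [Set.mem_singleton_iff] at h
    simp [h] at hi⟩

/-- The generator `a` (the first free generator in coordinate `0`). -/
def aGen : WGamma := SemidirectProduct.inl (delta0 (FreeGroup.of 0))

/-- The generator `b` (the second free generator in coordinate `0`). -/
def bGen : WGamma := SemidirectProduct.inl (delta0 (FreeGroup.of 1))

/-- The generator `s` (the shift). -/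
def sGen : WGamma := SemidirectProduct.inr (Multiplicative.ofAdd (1 : ℤ))

/-- The symmetric generating set `S = {s^{±1}, a^{±1}, b^{±1}}`. -/
noncomputable def SGen : Finset WGamma := by
  classical exact {sGen, aGen, bGen, sGen⁻¹, aGen⁻¹, bGen⁻¹}

/-- The subgroup `H_E = F₂^{⊕E}` of elements supported on `E ⊆ ℤ` with trivial
`ℤ`-component. -/
def HE (E : Set ℤ) : Subgroup WGamma where
  carrier := {x | x.right = 1 ∧ ∀ i : ℤ, i ∉ E → (x.left : ℤ → F2) i = 1}
  one_mem' := by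
    constructor
    · rfl
    · intro i _
      rfl
  mul_mem' := by
    rintro x y ⟨hx1, hx2⟩ ⟨hy1, hy2⟩
    constructor
    · simp [SemidirectProduct.mul_right, hx1, hy1]
    · intro i hi
      have : ((x * y).left : ℤ → F2) i
          = (x.left : ℤ → F2) i * ((shiftHom x.right y.left : Gsupp) : ℤ → F2) i := rfl
      rw [this, hx2 i hi, one_mul, hx1]
      simpa using hy2 i hi
  inv_mem' := by
    rintro x ⟨hx1, hx2⟩
    constructor
    · simp [SemidirectProduct.inv_right, hx1]
    · intro i hi
      have h1 : ((x⁻¹).left : ℤ → F2) i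
          = ((shiftHom x.right⁻¹ x.left⁻¹ : Gsupp) : ℤ → F2) i := rfl
      rw [h1, hx1, inv_one, map_one]
      simp [hx2 i hi]

/-- A subgroup `H ≤ Γ` is co-amenable (w.r.t. `S`) if the Schreier graph of the coset
space satisfies the Følner condition. -/
def Coamenable (H : Subgroup WGamma) : Prop :=
  ∀ ε : ℝ, 0 < ε → ∃ F : Finset (WGamma ⧸ H), F.Nonempty ∧
    ((((SGen : Set WGamma) • (F : Set (WGamma ⧸ H))) \ (F : Set (WGamma ⧸ H))).ncard : ℝ)
      ≤ ε * F.card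

/-!
The cosets `s⁻ᵐ H_C` with `m` in an interval `[a, a + n] ⊆ C` form a Følner set of the Schreier
graph. For `m ∈ C`, conjugating `a^{±1}, b^{±1}` by `sᵐ` gives elements supported at `m ∈ C`, so
these generators fix `s⁻ᵐ H_C`, while `s^{±1}` moves it to `s⁻⁽ᵐ⁻¹⁾ H_C` or `s⁻⁽ᵐ⁺¹⁾ H_C`. Hence
the boundary consists of at most the two cosets just outside the interval, whereas the set has
`n + 1` elements.
-/

open SemidirectProduct

def schreierBoundary {H : Subgroup WGamma} (F : Finset (WGamma ⧸ H)) : Set (WGamma ⧸ H) :=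
  ((SGen : Set WGamma) • (F : Set (WGamma ⧸ H))) \ (F : Set (WGamma ⧸ H))

theorem coamenable_of_ncard_schreierBoundary_le {H : Subgroup WGamma} (K : ℕ)
    (h : ∀ n : ℕ, ∃ F : Finset (WGamma ⧸ H), n ≤ F.card ∧ (schreierBoundary F).ncard ≤ K) :
    Coamenable H := by
  intro ε hε
  obtain ⟨F, hcard, hbdry⟩ := h (⌈K / ε⌉₊ + 1)
  refine ⟨F, Finset.card_pos.mp (by omega), ?_⟩
  have hK : (K : ℝ) / ε ≤ F.card := by
    calc (K : ℝ) / ε ≤ ⌈K / ε⌉₊ := Nat.le_ceil _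
      _ ≤ F.card := by exact_mod_cast (Nat.le_succ _).trans hcard
  calc ((schreierBoundary F).ncard : ℝ) ≤ K := by exact_mod_cast hbdry
    _ ≤ ε * F.card := by rwa [div_le_iff₀ hε, mul_comm] at hK

/-- The coset `s⁻ᵐ H_C`. -/
noncomputable def shiftCoset (C : Set ℤ) (m : ℤ) : WGamma ⧸ HE C :=
  QuotientGroup.mk (inr (Multiplicative.ofAdd (-m)))

theorem shiftCoset_injective (C : Set ℤ) : Function.Injective (shiftCoset C) := by
  intro m m' h
  have hright := (QuotientGroup.eq.mp h).1
  rw [← map_inv, ← map_mul, right_inr] at hright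
  have := congrArg Multiplicative.toAdd hright
  simp only [toAdd_mul, toAdd_inv, toAdd_ofAdd, toAdd_one] at this
  omega

theorem inr_mul_inl_delta0_mul_inr_inv_mem_HE {C : Set ℤ} {m : ℤ} (hm : m ∈ C) (w : F2) :
    (inr (Multiplicative.ofAdd m) : WGamma) * inl (delta0 w)
      * (inr (Multiplicative.ofAdd m))⁻¹ ∈ HE C := by
  rw [← map_inv, ← inl_aut]
  refine ⟨rfl, fun i hi => ?_⟩
  have hne : i - m ≠ 0 := fun h => hi (by rwa [sub_eq_zero.mp h])
  show (if i - m = 0 then w else 1) = 1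
  rw [if_neg hne]

theorem inl_delta0_smul_shiftCoset {C : Set ℤ} {m : ℤ} (hm : m ∈ C) (w : F2) :
    (inl (delta0 w) : WGamma) • shiftCoset C m = shiftCoset C m := by
  rw [shiftCoset, MulAction.Quotient.smul_mk, smul_eq_mul, QuotientGroup.eq, ofAdd_neg, map_inv]
  convert (HE C).inv_mem (inr_mul_inl_delta0_mul_inr_inv_mem_HE hm w) using 1
  group

theorem sGen_smul_shiftCoset (C : Set ℤ) (m : ℤ) :
    sGen • shiftCoset C m = shiftCoset C (m - 1) := by
  rw [shiftCoset, shiftCoset, sGen, MulAction.Quotient.smul_mk, smul_eq_mul, ← map_mul,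
    ← ofAdd_add]
  congr 3
  ring

theorem sGen_inv_smul_shiftCoset (C : Set ℤ) (m : ℤ) :
    sGen⁻¹ • shiftCoset C m = shiftCoset C (m + 1) := by
  rw [inv_smul_eq_iff, sGen_smul_shiftCoset, add_sub_cancel_right]

theorem SGen_smul_shiftCoset_mem {C : Set ℤ} {m : ℤ} (hm : m ∈ C) {g : WGamma}
    (hg : g ∈ SGen) :
    g • shiftCoset C m ∈
      ({shiftCoset C (m - 1), shiftCoset C m, shiftCoset C (m + 1)} : Set (WGamma ⧸ HE C)) := by
  have hfix : ∀ w : F2, (inl (delta0 w) : WGamma)⁻¹ • shiftCoset C m = shiftCoset C m :=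
    fun w => inv_smul_eq_iff.mpr (inl_delta0_smul_shiftCoset hm w).symm
  simp only [SGen, Finset.mem_insert, Finset.mem_singleton] at hg
  rcases hg with rfl | rfl | rfl | rfl | rfl | rfl
  · exact .inl (sGen_smul_shiftCoset C m)
  · exact .inr (.inl (inl_delta0_smul_shiftCoset hm _))
  · exact .inr (.inl (inl_delta0_smul_shiftCoset hm _))
  · exact .inr (.inr (sGen_inv_smul_shiftCoset C m))
  · exact .inr (.inl (hfix _))
  · exact .inr (.inl (hfix _))

noncomputable def intervalCosets (C : Set ℤ) (a b : ℤ) : Finset (WGamma ⧸ HE C) :=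
  (Finset.Icc a b).map ⟨shiftCoset C, shiftCoset_injective C⟩

theorem shiftCoset_mem_intervalCosets_iff {C : Set ℤ} {a b m : ℤ} :
    shiftCoset C m ∈ intervalCosets C a b ↔ a ≤ m ∧ m ≤ b :=
  (Finset.mem_map' ⟨shiftCoset C, shiftCoset_injective C⟩).trans Finset.mem_Icc

theorem card_intervalCosets (C : Set ℤ) (a : ℤ) (n : ℕ) :
    (intervalCosets C a (a + n)).card = n + 1 := by
  rw [intervalCosets, Finset.card_map, Int.card_Icc]
  omega

theorem schreierBoundary_intervalCosets_subset {C : Set ℤ} {a b : ℤ} (hab : Set.Icc a b ⊆ C) :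
    schreierBoundary (intervalCosets C a b) ⊆ {shiftCoset C (a - 1), shiftCoset C (b + 1)} := by
  rintro _ ⟨⟨g, hg, _, hx, rfl⟩, hout⟩
  obtain ⟨m, hm, rfl⟩ : ∃ m ∈ Finset.Icc a b, shiftCoset C m = _ := Finset.mem_map.mp hx
  replace hout : g • shiftCoset C m ∉ intervalCosets C a b := hout
  rw [Finset.mem_Icc] at hm
  have hmoved := SGen_smul_shiftCoset_mem (hab hm) hg
  simp only [Set.mem_insert_iff, Set.mem_singleton_iff] at hmoved ⊢
  rcases hmoved with h | h | h <;>
    rw [h, shiftCoset_mem_intervalCosets_iff] at hout <;> rw [h]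
  · exact .inl (by congr 1; omega)
  · exact absurd hm hout
  · exact .inr (by congr 1; omega)

theorem ncard_schreierBoundary_intervalCosets_le {C : Set ℤ} {a b : ℤ}
    (hab : Set.Icc a b ⊆ C) : (schreierBoundary (intervalCosets C a b)).ncard ≤ 2 :=
  (Set.ncard_le_ncard (schreierBoundary_intervalCosets_subset hab) (Set.toFinite _)).trans
    ((Set.ncard_insert_le _ _).trans (by rw [Set.ncard_singleton]))

/-- In `Γ = F₂^{⊕ℤ} ⋊ ℤ`, if `C ⊆ ℤ` contains arbitrarily long intervals,
then `H_C = F₂^{⊕C}` is co-amenable (the Schreier graph of `Γ/H_C` w.r.t.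
`S = {s^{±1}, a^{±1}, b^{±1}}` satisfies the Følner condition). -/
theorem HC_coamenable (C : Set ℤ)
    (hC : ∀ n : ℕ, ∃ a : ℤ, Set.Icc a (a + n) ⊆ C) :
    Coamenable (HE C) := by
  refine coamenable_of_ncard_schreierBoundary_le 2 fun n => ?_
  obtain ⟨a, ha⟩ := hC n
  exact ⟨intervalCosets C a (a + n), by rw [card_intervalCosets]; omega,
    ncard_schreierBoundary_intervalCosets_le ha⟩
end

section
/- In Γ = F₂^{⊕ℤ} ⋊ ℤ, if A, B ⊆ ℤ are disjoint, then H_A ∩ H_B is trivial; consequently, there exist co-amenable subgroups H₁, H₂ of the non-amenable group Γ with trivial (hence non-co-amenable) intersection, namely H_A and H_B for disjoint A, B each containing arbitrarily long intervals. -/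
/-!
An element of `H_A ⊓ H_B` has trivial `ℤ`-part and is supported on `A ∩ B`.

Non-amenability is a ping-pong count on the first letter of the word in coordinate `0`:
left multiplication by the letter `x⁻¹` sends every element whose word does not start with `x`
to one whose word starts with `x⁻¹`, so for each free generator `x` and finite `F`,
`|F| ≤ #(F starts with x) + #(F starts with x⁻¹) + |∂F|`. Adding this for `a` and `b` gives
`|F| ≤ 2 |∂F|`.

The cosets `s⁻ʲ H_A` are pairwise distinct, `s^{±1}` moves the index `j` to `j ∓ 1`, and `a`, `b`
fix `s⁻ʲ H_A` when `j ∈ A` (they conjugate to elements supported at `j`). Hence the cosets indexed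
by an interval contained in `A` form a Følner set whose boundary has at most two points.
-/

open scoped Pointwise

open SemidirectProduct Finset

section Folner

variable {G α : Type*}

def outerBoundary [SMul G α] (S : Set G) (F : Set α) : Set α := S • F \ F

variable (α) in
def FolnerCondition [SMul G α] (S : Set G) : Prop :=
  ∀ ε : ℝ, 0 < ε → ∃ F : Finset α, F.Nonempty ∧ ((outerBoundary S (F : Set α)).ncard : ℝ) ≤ ε * #F

lemma folnerCondition_of_bounded_outerBoundary [SMul G α] {S : Set G} (C : ℕ)
    (h : ∀ n : ℕ, ∃ F : Finset α, n ≤ #F ∧ (outerBoundary S (F : Set α)).ncard ≤ C) :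
    FolnerCondition α S := by
  intro ε hε
  obtain ⟨F, hn, hC⟩ := h (⌈C / ε⌉₊ + 1)
  refine ⟨F, card_pos.mp (by omega), ?_⟩
  calc ((outerBoundary S (F : Set α)).ncard : ℝ) ≤ C := by exact_mod_cast hC
    _ = ε * (C / ε) := by field_simp
    _ ≤ ε * #F := by
      gcongr
      exact (Nat.le_ceil _).trans (by exact_mod_cast (Nat.le_succ _).trans hn)

lemma not_folnerCondition_of_card_le_mul [SMul G α] {S : Set G} (c : ℕ)
    (h : ∀ F : Finset α, #F ≤ c * (outerBoundary S (F : Set α)).ncard) : ¬ FolnerCondition α S := by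
  intro hF
  obtain ⟨F, hne, hle⟩ := hF (1 / (c + 1)) (by positivity)
  have hpos : (0 : ℝ) < #F := by exact_mod_cast hne.card_pos
  have hcard : (#F : ℝ) ≤ c * (outerBoundary S (F : Set α)).ncard := by exact_mod_cast h F
  have : (#F : ℝ) * (c + 1) ≤ c * #F := by
    calc (#F : ℝ) * (c + 1) ≤ c * (outerBoundary S (F : Set α)).ncard * (c + 1) := by gcongr
      _ ≤ c * (1 / (c + 1) * #F) * (c + 1) := by gcongr
      _ = c * #F := by field_simp
  nlinarith

lemma card_le_card_filter_add_card_filter_add_ncard_outerBoundary [Group G] [MulAction G α]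
    {S : Set G} (hS : S.Finite) {g : G} (hg : g ∈ S) {p q : α → Prop} [DecidablePred p]
    [DecidablePred q] (hpq : ∀ x, ¬ p x → q (g • x)) (F : Finset α) :
    #F ≤ #{x ∈ F | p x} + #{x ∈ F | q x} + (outerBoundary S (F : Set α)).ncard := by
  classical
  have hfin : (outerBoundary S (F : Set α)).Finite := (hS.smul F.finite_toSet).sdiff
  have hsub : {x ∈ F | ¬ p x}.image (g • ·) ⊆ {x ∈ F | q x} ∪ hfin.toFinset := by
    simp only [subset_iff, mem_image, mem_filter, mem_union, Set.Finite.mem_toFinset]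
    rintro _ ⟨x, ⟨hxF, hpx⟩, rfl⟩
    by_cases hgx : g • x ∈ F
    · exact Or.inl ⟨hgx, hpq x hpx⟩
    · exact Or.inr ⟨Set.smul_mem_smul hg hxF, hgx⟩
  calc #F = #{x ∈ F | p x} + #{x ∈ F | ¬ p x} := (card_filter_add_card_filter_not p).symm
    _ = #{x ∈ F | p x} + #({x ∈ F | ¬ p x}.image (g • ·)) := by
      rw [card_image_of_injective _ (MulAction.injective g)]
    _ ≤ #{x ∈ F | p x} + (#{x ∈ F | q x} + #hfin.toFinset) := by
      gcongr
      exact (card_le_card hsub).trans (card_union_le _ _)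
    _ = _ := by rw [Set.ncard_eq_toFinset_card _ hfin, add_assoc]

end Folner

lemma mem_HE {E : Set ℤ} {x : WGamma} :
    x ∈ HE E ↔ x.right = 1 ∧ ∀ i : ℤ, i ∉ E → (x.left : ℤ → F2) i = 1 := Iff.rfl

lemma HE_inf_HE (A B : Set ℤ) : HE A ⊓ HE B = HE (A ∩ B) := by
  ext x
  simp only [Subgroup.mem_inf, mem_HE, Set.mem_inter_iff, not_and_or]
  grind

lemma HE_empty : HE ∅ = ⊥ := by
  refine (Subgroup.eq_bot_iff_forall _).mpr fun x ⟨hright, hleft⟩ => ?_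
  ext i
  · exact hleft i (Set.notMem_empty i)
  · exact hright

lemma HE_inf_HE_eq_bot {A B : Set ℤ} (h : Disjoint A B) : HE A ⊓ HE B = ⊥ := by
  rw [HE_inf_HE, h.inter_eq, HE_empty]

def letterAt0 (w : Fin 2 × Bool) : WGamma := inl (delta0 (FreeGroup.mk [w]))

lemma delta0_inv (w : F2) : delta0 w⁻¹ = (delta0 w)⁻¹ := by
  ext i
  change (if i = 0 then w⁻¹ else 1) = (if i = 0 then w else 1)⁻¹
  split_ifs <;> simp

lemma letterAt0_mem_SGen (w : Fin 2 × Bool) : letterAt0 w ∈ SGen := by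
  obtain ⟨i, _ | _⟩ := w <;> fin_cases i <;>
    simp [letterAt0, SGen, aGen, bGen, FreeGroup.of, ← map_inv, ← delta0_inv, FreeGroup.inv_mk,
      FreeGroup.invRev]

lemma inl_delta0_mul_left_apply_zero (u : F2) (γ : WGamma) :
    ((inl (delta0 u) * γ).left : ℤ → F2) 0 = u * (γ.left : ℤ → F2) 0 := by
  simp [delta0]

def headAt0 (γ : WGamma) : Option (Fin 2 × Bool) := ((γ.left : ℤ → F2) 0).toWord[0]?

lemma headAt0_letterAt0_mul (w : Fin 2 × Bool) (γ : WGamma)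
    (h : headAt0 γ ≠ some (w.1, !w.2)) : headAt0 (letterAt0 w * γ) = some w := by
  rw [headAt0, letterAt0, inl_delta0_mul_left_apply_zero]
  exact FreeGroup.startsWith_mk_mul _ h

lemma sum_card_filter_headAt0_le (F : Finset WGamma) :
    ∑ w : Fin 2 × Bool, #{γ ∈ F | headAt0 γ = some w} ≤ #F := by
  rw [card_eq_sum_card_fiberwise (f := headAt0) (t := univ) (by simp), Fintype.sum_option]
  exact Nat.le_add_left _ _

lemma card_le_two_mul_ncard_outerBoundary (F : Finset WGamma) :
    #F ≤ 2 * (outerBoundary (SGen : Set WGamma) (F : Set WGamma)).ncard := by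
  have pingpong (i : Fin 2) :=
    card_le_card_filter_add_card_filter_add_ncard_outerBoundary SGen.finite_toSet
      (letterAt0_mem_SGen (i, false)) (p := fun γ => headAt0 γ = some (i, true))
      (q := fun γ => headAt0 γ = some (i, false)) (headAt0_letterAt0_mul (i, false)) F
  have fibers := sum_card_filter_headAt0_le F
  simp only [Fintype.sum_prod_type, Fin.sum_univ_two, Fintype.sum_bool] at fibers
  have := pingpong 0
  have := pingpong 1
  omega

lemma not_folnerCondition_WGamma : ¬ FolnerCondition WGamma (SGen : Set WGamma) :=
  not_folnerCondition_of_card_le_mul 2 card_le_two_mul_ncard_outerBoundary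

def cosetAt (A : Set ℤ) (j : ℤ) : WGamma ⧸ HE A :=
  QuotientGroup.mk (inr (Multiplicative.ofAdd (-j)))

lemma cosetAt_injective (A : Set ℤ) : Function.Injective (cosetAt A) := by
  intro j l h
  have hright := congrArg Multiplicative.toAdd (mem_HE.mp (QuotientGroup.eq.mp h)).1
  simp only [← map_inv, ← map_mul, right_inr, ← ofAdd_neg, ← ofAdd_add, toAdd_ofAdd,
    toAdd_one] at hright
  omega

lemma inr_smul_cosetAt (A : Set ℤ) (k j : ℤ) :
    (inr (Multiplicative.ofAdd k) : WGamma) • cosetAt A j = cosetAt A (j - k) := by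
  change QuotientGroup.mk (_ * _) = QuotientGroup.mk _
  rw [← map_mul, ← ofAdd_add, neg_sub, sub_eq_add_neg]

lemma inl_delta0_smul_cosetAt {A : Set ℤ} {j : ℤ} (hj : j ∈ A) (u : F2) :
    (inl (delta0 u) : WGamma) • cosetAt A j = cosetAt A j := by
  change QuotientGroup.mk (_ * _) = QuotientGroup.mk _
  rw [QuotientGroup.eq, mul_inv_rev, ← map_inv inr, ← map_inv inl, ← inl_aut_inv]
  refine mem_HE.mpr ⟨right_inl _, fun i hi => ?_⟩
  have hij : i + -j ≠ 0 := fun h => hi (by rwa [show i = j by omega])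
  rw [left_inl]
  simp [shiftHom, shiftG, shiftPi, delta0, hij]

lemma smul_cosetAt_mem_image {A : Set ℤ} {j : ℤ} (hj : j ∈ A) {g : WGamma} (hg : g ∈ SGen) :
    g • cosetAt A j ∈ cosetAt A '' Set.Icc (j - 1) (j + 1) := by
  have hfix (u : F2) :
      (inl (delta0 u) : WGamma) • cosetAt A j ∈ cosetAt A '' Set.Icc (j - 1) (j + 1) :=
    ⟨j, by simp, (inl_delta0_smul_cosetAt hj u).symm⟩
  replace hg : g = sGen ∨ g = aGen ∨ g = bGen ∨ g = sGen⁻¹ ∨ g = aGen⁻¹ ∨ g = bGen⁻¹ := by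
    simpa [SGen] using hg
  rcases hg with rfl | rfl | rfl | rfl | rfl | rfl
  · exact ⟨j - 1, ⟨by omega, by omega⟩, (inr_smul_cosetAt A 1 j).symm⟩
  · exact hfix _
  · exact hfix _
  · rw [sGen, ← map_inv, ← ofAdd_neg]
    exact ⟨j + 1, ⟨by omega, by omega⟩, by rw [inr_smul_cosetAt, sub_neg_eq_add]⟩
  · rw [aGen, ← map_inv, ← delta0_inv]
    exact hfix _
  · rw [bGen, ← map_inv, ← delta0_inv]
    exact hfix _

lemma outerBoundary_image_Icc_subset {A : Set ℤ} {a b : ℤ} (h : Set.Icc a b ⊆ A) :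
    outerBoundary (SGen : Set WGamma) (cosetAt A '' Set.Icc a b) ⊆
      {cosetAt A (a - 1), cosetAt A (b + 1)} := by
  rintro _ ⟨⟨g, hg, _, ⟨k, hk, rfl⟩, rfl⟩, hout⟩
  obtain ⟨m, hm, hgm⟩ := smul_cosetAt_mem_image (h hk) hg
  have hm' : m ∉ Set.Icc a b := fun hm' => hout ⟨m, hm', hgm⟩
  simp only [Set.mem_Icc] at hk hm hm'
  obtain rfl | rfl : m = a - 1 ∨ m = b + 1 := by omega
  all_goals simp [← hgm]

lemma coamenable_HE {A : Set ℤ} (h : ∀ n : ℕ, ∃ a : ℤ, Set.Icc a (a + n) ⊆ A) :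
    Coamenable (HE A) := by
  classical
  refine folnerCondition_of_bounded_outerBoundary 2 fun n => ?_
  obtain ⟨a, ha⟩ := h n
  refine ⟨(Icc a (a + n)).image (cosetAt A), ?_, ?_⟩
  · rw [card_image_of_injective _ (cosetAt_injective A), Int.card_Icc]
    omega
  · rw [coe_image, coe_Icc]
    exact (Set.ncard_le_ncard (outerBoundary_image_Icc_subset ha)).trans
      ((Set.ncard_insert_le _ _).trans (by rw [Set.ncard_singleton]))

open Classical in
/-- In `Γ = F₂^{⊕ℤ} ⋊ ℤ`: (i) if `A, B ⊆ ℤ` are disjoint then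
`H_A ∩ H_B` is trivial; (ii) `Γ` is non-amenable (it fails the Følner condition w.r.t.
the generating set `S`); and consequently (iii) there exist co-amenable subgroups
`H₁, H₂` of `Γ` with trivial intersection. -/
theorem disjoint_supports_trivial_intersection_and_counterexample :
    (∀ A B : Set ℤ, Disjoint A B → HE A ⊓ HE B = ⊥) ∧
    ¬ (∀ ε : ℝ, 0 < ε → ∃ F : Finset WGamma, F.Nonempty ∧
        ((((SGen : Set WGamma) • (F : Set WGamma)) \ (F : Set WGamma)).ncard : ℝ)
          ≤ ε * F.card) ∧
    ∃ A B : Set ℤ, Disjoint A B ∧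
      (∀ n : ℕ, ∃ a : ℤ, Set.Icc a (a + n) ⊆ A) ∧
      (∀ n : ℕ, ∃ a : ℤ, Set.Icc a (a + n) ⊆ B) ∧
      Coamenable (HE A) ∧ Coamenable (HE B) ∧ HE A ⊓ HE B = ⊥ := by
  have hdisj : Disjoint (Set.Ici (0 : ℤ)) (Set.Iio 0) := (Set.Iio_disjoint_Ici le_rfl).symm
  have long_Ici (n : ℕ) : ∃ a : ℤ, Set.Icc a (a + n) ⊆ Set.Ici 0 := ⟨0, Set.Icc_subset_Ici_self⟩
  have long_Iio (n : ℕ) : ∃ a : ℤ, Set.Icc a (a + n) ⊆ Set.Iio 0 :=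
    ⟨-(n + 1), fun x hx => show x < 0 by linarith [hx.2]⟩
  exact ⟨fun _ _ => HE_inf_HE_eq_bot, not_folnerCondition_WGamma, Set.Ici 0, Set.Iio 0, hdisj,
    long_Ici, long_Iio, coamenable_HE long_Ici, coamenable_HE long_Iio, HE_inf_HE_eq_bot hdisj⟩
end

section
/- The co-spectral radius function H ↦ ρ(Γ/H) is lower semi-continuous on the Chabauty space Sub(Γ) of subgroups of a countable group Γ: if H_n → H in Sub(Γ), then ρ(Γ/H) ≤ liminf_n ρ(Γ/H_n). -/
/-!
Finitely supported functions are dense in `ℓ²`, so it suffices to bound `‖Mψ‖` for `ψ` supported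
on a finite set `T` of cosets of `H`. Then `ψ` and `Mψ` live on `T ∪ S⁻¹T`, and how `S` moves
these cosets among each other is decided by finitely many memberships `(s g)⁻¹ g' ∈ H`. Once `Hₙ`
agrees with `H` on these elements, `gH ↦ gHₙ` is a local isomorphism of Schreier graphs there: it
carries `ψ` isometrically to `ℓ²(Γ/Hₙ)` and `Mψ` onto part of `Mₙ` of the transported vector, so
`‖Mψ‖ ≤ ρ(Γ/Hₙ) ‖ψ‖` for all large `n`.
-/

open Filter
open scoped Pointwise ENNReal

namespace lp

variable {ι α β : Type*}

theorem hasSum_sq (f : lp (fun _ : ι => ℝ) 2) : HasSum (fun i => f i ^ 2) (‖f‖ ^ 2) := by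
  simpa [Real.norm_eq_abs] using lp.hasSum_norm (p := 2) (by norm_num) f

theorem norm_sq_eq_sum_of_support_subset {f : lp (fun _ : ι => ℝ) 2} {s : Finset ι}
    (hf : ∀ i ∉ s, f i = 0) : ‖f‖ ^ 2 = ∑ i ∈ s, f i ^ 2 :=
  (hasSum_sq f).unique (hasSum_sum_of_ne_finset_zero fun i hi => by simp [hf i hi])

theorem sum_sq_le_norm_sq (f : lp (fun _ : ι => ℝ) 2) (s : Finset ι) :
    ∑ i ∈ s, f i ^ 2 ≤ ‖f‖ ^ 2 :=
  sum_le_hasSum s (fun _ _ => sq_nonneg _) (hasSum_sq f)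

section FiniteSupport

variable {E : ι → Type*} [∀ i, NormedAddCommGroup (E i)] {p : ℝ≥0∞} [Fact (1 ≤ p)]

theorem dense_setOf_finite_support (hp : p ≠ ⊤) :
    Dense {f : lp E p | ∃ s : Finset ι, ∀ i ∉ s, f i = 0} := by
  classical
  refine fun f => mem_closure_of_tendsto (lp.hasSum_single hp f)
    (Eventually.of_forall fun s => ⟨s, fun i hi => ?_⟩)
  rw [lp.coeFn_sum, Finset.sum_apply]
  simp [lp.single_apply, hi]

theorem opNorm_le_of_forall_finite_support {𝕜 F : Type*} [NontriviallyNormedField 𝕜]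
    [∀ i, NormedSpace 𝕜 (E i)] [SeminormedAddCommGroup F] [NormedSpace 𝕜 F] (hp : p ≠ ⊤)
    (T : lp E p →L[𝕜] F) {C : ℝ} (hC : 0 ≤ C)
    (h : ∀ (f : lp E p) (s : Finset ι), (∀ i ∉ s, f i = 0) → ‖T f‖ ≤ C * ‖f‖) : ‖T‖ ≤ C :=
  T.opNorm_le_bound hC fun f => (dense_setOf_finite_support hp).induction
    (P := fun f => ‖T f‖ ≤ C * ‖f‖) (fun g ⟨s, hs⟩ => h g s hs)
    (isClosed_le (by fun_prop) (by fun_prop)) f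

end FiniteSupport

noncomputable def pushforwardOn [DecidableEq β] (f : α → β) (V : Finset α)
    (ψ : lp (fun _ : α => ℝ) 2) : lp (fun _ : β => ℝ) 2 :=
  ∑ u ∈ V, lp.single 2 (f u) (ψ u)

variable [DecidableEq β] {f : α → β} {V : Finset α} {ψ : lp (fun _ : α => ℝ) 2}

theorem pushforwardOn_apply (z : β) :
    pushforwardOn f V ψ z = ∑ u ∈ V, if f u = z then ψ u else 0 := by
  rw [pushforwardOn, lp.coeFn_sum, Finset.sum_apply]
  simp [lp.single_apply, Pi.single_apply, eq_comm]

theorem pushforwardOn_apply_of_injOn (hf : Set.InjOn f V) {u : α} (hu : u ∈ V) :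
    pushforwardOn f V ψ (f u) = ψ u := by
  rw [pushforwardOn_apply, Finset.sum_eq_single_of_mem u hu fun t ht htu => if_neg ?_, if_pos rfl]
  exact fun h => htu (hf ht hu h)

theorem norm_pushforwardOn (hf : Set.InjOn f V) (hψ : ∀ a ∉ V, ψ a = 0) :
    ‖pushforwardOn f V ψ‖ = ‖ψ‖ := by
  have hsupp : ∀ z ∉ V.image f, pushforwardOn f V ψ z = 0 := fun z hz => by
    rw [pushforwardOn_apply]
    exact Finset.sum_eq_zero fun u hu => if_neg fun h => hz (Finset.mem_image.2 ⟨u, hu, h⟩)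
  rw [← pow_left_inj₀ (norm_nonneg _) (norm_nonneg _) two_ne_zero,
    norm_sq_eq_sum_of_support_subset hsupp, norm_sq_eq_sum_of_support_subset hψ,
    Finset.sum_image hf]
  exact Finset.sum_congr rfl fun u hu => by rw [pushforwardOn_apply_of_injOn hf hu]

end lp

section Averaging

variable {Γ α β : Type*}

def IsAveragingOperator [SMul Γ α] (S : Finset Γ)
    (M : lp (fun _ : α => ℝ) 2 →L[ℝ] lp (fun _ : α => ℝ) 2) : Prop :=
  ∀ (φ : lp (fun _ : α => ℝ) 2) (x : α), M φ x = (S.card : ℝ)⁻¹ * ∑ s ∈ S, φ (s • x)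

namespace IsAveragingOperator

variable {S : Finset Γ} {M : lp (fun _ : α => ℝ) 2 →L[ℝ] lp (fun _ : α => ℝ) 2}

theorem norm_le_one [Group Γ] [MulAction Γ α] (hM : IsAveragingOperator S M) : ‖M‖ ≤ 1 := by
  refine M.opNorm_le_bound zero_le_one fun φ => ?_
  rw [one_mul, ← pow_le_pow_iff_left₀ (norm_nonneg _) (norm_nonneg _) two_ne_zero]
  have hpt : ∀ x, M φ x ^ 2 ≤ (∑ s ∈ S, φ (s • x) ^ 2) / S.card := fun x => by
    rw [hM, inv_mul_eq_div]
    exact sum_div_card_sq_le_sum_sq_div_card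
  have htr : ∀ s : Γ, HasSum (fun x => φ (s • x) ^ 2) (‖φ‖ ^ 2) := fun s =>
    (Equiv.hasSum_iff (f := fun x => φ x ^ 2) (MulAction.toPerm s)).2 (lp.hasSum_sq φ)
  have hsum : HasSum (fun x => (∑ s ∈ S, φ (s • x) ^ 2) / S.card)
      (S.card * ‖φ‖ ^ 2 / S.card) := by
    simpa using (hasSum_sum fun s _ => htr s).div_const (S.card : ℝ)
  refine (hasSum_le hpt (lp.hasSum_sq (M φ)) hsum).trans ?_
  obtain hS | hS := eq_or_ne (S.card : ℝ) 0
  · simp [hS]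
  · rw [mul_div_cancel_left₀ _ hS]

theorem apply_eq_zero_of_notMem_inv_smul [Group Γ] [MulAction Γ α] [DecidableEq Γ]
    [DecidableEq α] (hM : IsAveragingOperator S M) {ψ : lp (fun _ : α => ℝ) 2} {T : Finset α}
    (hψ : ∀ a ∉ T, ψ a = 0) {x : α} (hx : x ∉ S⁻¹ • T) : M ψ x = 0 := by
  rw [hM, Finset.sum_eq_zero, mul_zero]
  refine fun s hs => hψ _ fun h => hx ?_
  exact Finset.mem_smul.2 ⟨s⁻¹, Finset.inv_mem_inv hs, s • x, h, inv_smul_smul s x⟩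

theorem norm_apply_le_of_intertwining [SMul Γ α] [SMul Γ β] [DecidableEq β]
    {N : lp (fun _ : β => ℝ) 2 →L[ℝ] lp (fun _ : β => ℝ) 2}
    (hM : IsAveragingOperator S M) (hN : IsAveragingOperator S N) {f : α → β} {V : Finset α}
    (hf : Set.InjOn f V) (hfS : ∀ s ∈ S, ∀ u ∈ V, ∀ t ∈ V, s • f u = f t ↔ s • u = t)
    {ψ : lp (fun _ : α => ℝ) 2} (hψ : ∀ a ∉ V, ψ a = 0) (hMψ : ∀ a ∉ V, M ψ a = 0) :
    ‖M ψ‖ ≤ ‖N‖ * ‖ψ‖ := by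
  classical
  set φ := lp.pushforwardOn f V ψ
  have hφ : ∀ s ∈ S, ∀ u ∈ V, φ (s • f u) = ψ (s • u) := fun s hs u hu => by
    have hψ' : ψ (s • u) = if s • u ∈ V then ψ (s • u) else 0 := by
      split_ifs with h
      exacts [rfl, hψ _ h]
    rw [lp.pushforwardOn_apply, hψ', ← Finset.sum_ite_eq]
    exact Finset.sum_congr rfl fun t ht => by simp only [eq_comm (a := f t), hfS s hs u hu t ht]
  have hNφ : ∀ u ∈ V, N φ (f u) = M ψ u := fun u hu => by
    rw [hN, hM]
    exact congrArg _ (Finset.sum_congr rfl fun s hs => hφ s hs u hu)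
  have hsq : ‖M ψ‖ ^ 2 ≤ ‖N φ‖ ^ 2 := by
    rw [lp.norm_sq_eq_sum_of_support_subset hMψ]
    calc ∑ u ∈ V, M ψ u ^ 2 = ∑ z ∈ V.image f, N φ z ^ 2 := by
          rw [Finset.sum_image hf]
          exact Finset.sum_congr rfl fun u hu => by rw [hNφ u hu]
      _ ≤ ‖N φ‖ ^ 2 := lp.sum_sq_le_norm_sq _ _
  calc ‖M ψ‖ ≤ ‖N φ‖ := (pow_le_pow_iff_left₀ (norm_nonneg _) (norm_nonneg _) two_ne_zero).1 hsq
    _ ≤ ‖N‖ * ‖φ‖ := N.le_opNorm φ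
    _ = ‖N‖ * ‖ψ‖ := by rw [lp.norm_pushforwardOn hf hψ]

end IsAveragingOperator

end Averaging

theorem QuotientGroup.eventually_smul_out_eq_out_iff {Γ ι : Type*} [Group Γ] {l : Filter ι}
    {K : ι → Subgroup Γ} {H : Subgroup Γ} (hK : ∀ γ, ∀ᶠ n in l, γ ∈ K n ↔ γ ∈ H)
    (S : Finset Γ) (V : Finset (Γ ⧸ H)) :
    ∀ᶠ n in l, ∀ s ∈ S, ∀ u ∈ V, ∀ t ∈ V,
      s • (u.out : Γ ⧸ K n) = (t.out : Γ ⧸ K n) ↔ s • u = t := by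
  simp only [eventually_all_finset]
  intro s _ u _ t _
  filter_upwards [hK ((s * u.out)⁻¹ * t.out)] with n hn
  conv_rhs => rw [← QuotientGroup.out_eq' u, ← QuotientGroup.out_eq' t]
  exact (QuotientGroup.eq.trans hn).trans QuotientGroup.eq.symm

theorem IsAveragingOperator.eventually_norm_apply_le {Γ ι : Type*} [Group Γ] {l : Filter ι}
    {K : ι → Subgroup Γ} {H : Subgroup Γ} (hK : ∀ γ, ∀ᶠ n in l, γ ∈ K n ↔ γ ∈ H)
    {S : Finset Γ} {M : lp (fun _ : Γ ⧸ H => ℝ) 2 →L[ℝ] lp (fun _ : Γ ⧸ H => ℝ) 2}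
    (hM : IsAveragingOperator S M)
    {N : ∀ n, lp (fun _ : Γ ⧸ K n => ℝ) 2 →L[ℝ] lp (fun _ : Γ ⧸ K n => ℝ) 2}
    (hN : ∀ n, IsAveragingOperator S (N n)) {ψ : lp (fun _ : Γ ⧸ H => ℝ) 2}
    {T : Finset (Γ ⧸ H)} (hψ : ∀ a ∉ T, ψ a = 0) :
    ∀ᶠ n in l, ‖M ψ‖ ≤ ‖N n‖ * ‖ψ‖ := by
  classical
  -- `1 ∈ insert 1 S` makes `gH ↦ gHₙ` injective on the relevant cosets.
  filter_upwards [QuotientGroup.eventually_smul_out_eq_out_iff hK (insert 1 S) (T ∪ S⁻¹ • T)]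
    with n hn
  refine hM.norm_apply_le_of_intertwining (hN n) (f := fun q => (q.out : Γ ⧸ K n)) ?_
    (fun s hs => hn s (Finset.mem_insert_of_mem hs)) (fun a ha => hψ a ?_)
    (fun a ha => hM.apply_eq_zero_of_notMem_inv_smul hψ ?_)
  · intro u hu t ht h
    simpa using (hn 1 (Finset.mem_insert_self _ _) u hu t ht).1 (by simpa using h)
  · exact fun h => ha (Finset.mem_union_left _ h)
  · exact fun h => ha (Finset.mem_union_right _ h)

theorem cospectral_radius_lower_semicontinuous_general
    {Γ : Type*} [Group Γ]
    (S : Finset Γ)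
    (ρ : Subgroup Γ → ℝ)
    (hρ : ∀ H : Subgroup Γ,
      ∀ M : lp (fun _ : Γ ⧸ H => ℝ) 2 →L[ℝ] lp (fun _ : Γ ⧸ H => ℝ) 2,
        (∀ (φ : lp (fun _ : Γ ⧸ H => ℝ) 2) (x : Γ ⧸ H),
          (M φ : ∀ _, ℝ) x = (S.card : ℝ)⁻¹ * ∑ s ∈ S, (φ : ∀ _, ℝ) (s • x)) →
        ρ H = ‖M‖)
    (hex : ∀ H : Subgroup Γ,
      ∃ M : lp (fun _ : Γ ⧸ H => ℝ) 2 →L[ℝ] lp (fun _ : Γ ⧸ H => ℝ) 2,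
        ∀ (φ : lp (fun _ : Γ ⧸ H => ℝ) 2) (x : Γ ⧸ H),
          (M φ : ∀ _, ℝ) x = (S.card : ℝ)⁻¹ * ∑ s ∈ S, (φ : ∀ _, ℝ) (s • x))
    (Hseq : ℕ → Subgroup Γ) (H : Subgroup Γ)
    (hconv : ∀ γ : Γ, ∀ᶠ n in atTop, (γ ∈ Hseq n ↔ γ ∈ H)) :
    ρ H ≤ liminf (fun n => ρ (Hseq n)) atTop := by
  choose M hM using hex
  replace hM : ∀ K, IsAveragingOperator S (M K) := hM
  have hρ_eq : ∀ K, ρ K = ‖M K‖ := fun K => hρ K (M K) (hM K)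
  -- Boundedness by `1` is what keeps the real `liminf` away from its junk value.
  have hcobdd : IsCoboundedUnder (· ≥ ·) atTop (fun n => ρ (Hseq n)) :=
    isBoundedUnder_of ⟨1, fun n => (hρ_eq _).trans_le (hM _).norm_le_one⟩ |>.isCoboundedUnder_ge
  have hL : 0 ≤ liminf (fun n => ρ (Hseq n)) atTop :=
    le_liminf_of_le hcobdd (.of_forall fun n => by rw [hρ_eq]; exact norm_nonneg _)
  rw [hρ_eq]
  refine lp.opNorm_le_of_forall_finite_support ENNReal.ofNat_ne_top _ hL fun ψ T hψ => ?_
  obtain rfl | hψ0 := eq_or_ne ψ 0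
  · simp
  have hψpos : 0 < ‖ψ‖ := norm_pos_iff.2 hψ0
  rw [← div_le_iff₀ hψpos]
  refine le_liminf_of_le hcobdd ?_
  filter_upwards [(hM H).eventually_norm_apply_le hconv (fun n => hM (Hseq n)) hψ] with n hn
  rwa [hρ_eq, div_le_iff₀ hψpos]

/-- The co-spectral radius `H ↦ ρ(Γ/H)` (the norm of the averaging
operator on `ℓ²(Γ/H)`) is lower semi-continuous on the Chabauty space of subgroups of a
countable group: if `H_n → H` pointwise (i.e. for each `γ`, eventually
`γ ∈ H_n ↔ γ ∈ H`), then `ρ(Γ/H) ≤ liminf_n ρ(Γ/H_n)`. -/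
theorem cospectral_radius_lower_semicontinuous
    {Γ : Type*} [Group Γ] [Countable Γ]
    (S : Finset Γ) (hSne : S.Nonempty) (hSsym : ∀ s ∈ S, s⁻¹ ∈ S)
    (ρ : Subgroup Γ → ℝ)
    (hρ : ∀ H : Subgroup Γ,
      ∀ M : lp (fun _ : Γ ⧸ H => ℝ) 2 →L[ℝ] lp (fun _ : Γ ⧸ H => ℝ) 2,
        (∀ (φ : lp (fun _ : Γ ⧸ H => ℝ) 2) (x : Γ ⧸ H),
          (M φ : ∀ _, ℝ) x = (S.card : ℝ)⁻¹ * ∑ s ∈ S, (φ : ∀ _, ℝ) (s • x)) →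
        ρ H = ‖M‖)
    (hex : ∀ H : Subgroup Γ,
      ∃ M : lp (fun _ : Γ ⧸ H => ℝ) 2 →L[ℝ] lp (fun _ : Γ ⧸ H => ℝ) 2,
        ∀ (φ : lp (fun _ : Γ ⧸ H => ℝ) 2) (x : Γ ⧸ H),
          (M φ : ∀ _, ℝ) x = (S.card : ℝ)⁻¹ * ∑ s ∈ S, (φ : ∀ _, ℝ) (s • x))
    (Hseq : ℕ → Subgroup Γ) (H : Subgroup Γ)
    (hconv : ∀ γ : Γ, ∀ᶠ n in atTop, (γ ∈ Hseq n ↔ γ ∈ H)) :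
    ρ H ≤ liminf (fun n => ρ (Hseq n)) atTop :=
  cospectral_radius_lower_semicontinuous_general S ρ hρ hex Hseq H hconv
end

section
/- Let F be an ε-Følner set in the Schreier graph of X₁ = H₁\Γ with respect to a finite symmetric generating set S, and let f₂ ∈ L²(X₂, ν₂) be nonnegative with ⟨(I − M)f₂, f₂⟩ ≤ (1 − λ + ε)‖f₂‖² for a p.m.p. action Γ ↷ (X₂, ν₂). Then f = 𝟙_F ⊗ f₂ ∈ L²(X₁ × X₂, ν₁ × ν₂) satisfies ⟨(I − M)f, f⟩ ≤ (1 − λ + ε + |S|ε)‖f‖², where M is the averaging operator of the diagonal action. -/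
open MeasureTheory
open scoped Pointwise

open Finset

/-! Write `A = ‖f₂‖²` and `Q = ⟨f₂, M f₂⟩`. Since `f = 𝟙_F ⊗ f₂`, we get `‖f‖² = |F| A` and
`⟨f, M f⟩ = |S|⁻¹ ∑_{s ∈ S} #{a ∈ F | s a ∈ F} ⟨f₂, f₂ ∘ s⟩ ≥ |int F| Q`, where `int F` is the
set of points of `F` that every `s ∈ S` keeps in `F`; the inequality needs `f₂ ≥ 0`. Therefore
`⟨(I - M) f, f⟩ ≤ |F| (A - Q) + (|F| - |int F|) Q`. The hypothesis bounds the first term by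
`(1 - λ + ε) |F| A`. For the second, `Q ≤ A` by Cauchy–Schwarz and invariance of `ν₂`, and
`|F| - |int F| ≤ |S| |S F \ F| ≤ |S| ε |F|` because some `s ∈ S` moves each point of
`F \ int F` into the boundary `S F \ F`. -/

section Interior

variable {G α : Type*} [DecidableEq α]

def smulInterior [SMul G α] (S : Finset G) (F : Finset α) : Finset α :=
  {a ∈ F | ∀ s ∈ S, s • a ∈ F}

section SMul

variable [SMul G α] (S : Finset G) (F : Finset α)

lemma smulInterior_subset : smulInterior S F ⊆ F :=
  filter_subset _ _

lemma card_smulInterior_le_card_filter {s : G} (hs : s ∈ S) :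
    #(smulInterior S F) ≤ #{a ∈ F | s • a ∈ F} :=
  card_le_card fun _ ha => by
    simp only [smulInterior, mem_filter] at ha ⊢
    exact ⟨ha.1, ha.2 s hs⟩

lemma card_smulInterior_mul_sum_le {B : G → ℝ} (hB : ∀ s ∈ S, 0 ≤ B s) :
    #(smulInterior S F) * ∑ s ∈ S, B s ≤ ∑ s ∈ S, (#{a ∈ F | s • a ∈ F} : ℝ) * B s := by
  rw [mul_sum]
  exact sum_le_sum fun s hs =>
    mul_le_mul_of_nonneg_right (mod_cast card_smulInterior_le_card_filter S F hs) (hB s hs)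

end SMul

lemma card_sub_card_smulInterior_le [Group G] [MulAction G α] (S : Finset G) (F : Finset α) :
    (#F : ℝ) - #(smulInterior S F) ≤ #S * (((S : Set G) • (F : Set α)) \ F).ncard := by
  rw [← coe_smul, ← coe_sdiff, Set.ncard_coe_finset, sub_le_iff_le_add']
  have hcover : F \ smulInterior S F ⊆ S.biUnion fun s => s⁻¹ • (S • F \ F) := by
    intro a ha
    simp only [smulInterior, mem_sdiff, mem_filter, not_and, not_forall] at ha
    obtain ⟨s, hs, hsa⟩ := ha.2 ha.1
    exact mem_biUnion.2
      ⟨s, hs, mem_inv_smul_finset_iff.2 (mem_sdiff.2 ⟨smul_mem_smul hs ha.1, hsa⟩)⟩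
  have hcard := (card_le_card hcover).trans card_biUnion_le
  simp only [card_smul_finset, sum_const, smul_eq_mul] at hcard
  have := card_sdiff_add_card_eq_card (smulInterior_subset S F)
  exact_mod_cast (by omega : #F ≤ #(smulInterior S F) + #S * #(S • F \ F))

end Interior

lemma inv_card_mul_sum_le {ι : Type*} {s : Finset ι} {B : ι → ℝ} {A : ℝ} (hA : 0 ≤ A)
    (hB : ∀ i ∈ s, B i ≤ A) : (#s : ℝ)⁻¹ * ∑ i ∈ s, B i ≤ A := by
  rcases s.eq_empty_or_nonempty with rfl | hs
  · simpa using hA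
  rw [inv_mul_le_iff₀ (by exact_mod_cast hs.card_pos), ← nsmul_eq_mul]
  exact sum_le_card_nsmul s B A hB

section MeasurePreserving

variable {X : Type*} [MeasurableSpace X] {μ : Measure X} {T : X → X} {f : X → ℝ}

lemma integrable_mul_comp (hT : MeasurePreserving T μ μ) (hf : MemLp f 2 μ) :
    Integrable (fun x => f x * f (T x)) μ :=
  hf.integrable_mul (hf.comp_measurePreserving hT)

lemma integral_sq_comp (hT : MeasurePreserving T μ μ) (hf : MemLp f 2 μ) :
    ∫ x, f (T x) ^ 2 ∂μ = ∫ x, f x ^ 2 ∂μ := by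
  have hf' : AEStronglyMeasurable (fun x => f x ^ 2) (μ.map T) := by
    rw [hT.map_eq]; exact hf.aestronglyMeasurable.pow 2
  rw [← integral_map hT.measurable.aemeasurable hf', hT.map_eq]

lemma integral_mul_comp_le_integral_sq (hT : MeasurePreserving T μ μ) (hf : MemLp f 2 μ) :
    ∫ x, f x * f (T x) ∂μ ≤ ∫ x, f x ^ 2 ∂μ := by
  have hfT : Integrable (fun x => f (T x) ^ 2) μ :=
    (hf.comp_measurePreserving hT).integrable_sq
  calc ∫ x, f x * f (T x) ∂μ ≤ ∫ x, (f x ^ 2 + f (T x) ^ 2) / 2 ∂μ :=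
        integral_mono (integrable_mul_comp hT hf) ((hf.integrable_sq.add hfT).div_const 2)
          fun x => by nlinarith [sq_nonneg (f x - f (T x))]
    _ = ∫ x, f x ^ 2 ∂μ := by
        rw [integral_div, integral_add hf.integrable_sq hfT, integral_sq_comp hT hf]; ring

lemma inv_card_mul_sum_integral_mul_smul_le {Γ : Type*} [SMul Γ X] (S : Finset Γ)
    (hS : ∀ s ∈ S, MeasurePreserving (s • ·) μ μ) (hf : MemLp f 2 μ) :
    (#S : ℝ)⁻¹ * ∑ s ∈ S, ∫ x, f x * f (s • x) ∂μ ≤ ∫ x, f x ^ 2 ∂μ :=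
  inv_card_mul_sum_le (integral_nonneg fun _ => sq_nonneg _)
    fun s hs => integral_mul_comp_le_integral_sq (hS s hs) hf

end MeasurePreserving

lemma integral_mul_sub_smul_sum {Γ X : Type*} [MeasurableSpace X] {μ : Measure X} [SMul Γ X]
    (S : Finset Γ) (c : ℝ) {f : X → ℝ} (hf : Integrable (fun x => f x ^ 2) μ)
    (hfS : ∀ s ∈ S, Integrable (fun x => f x * f (s • x)) μ) :
    ∫ x, f x * (f x - c * ∑ s ∈ S, f (s • x)) ∂μ
      = ∫ x, f x ^ 2 ∂μ - c * ∑ s ∈ S, ∫ x, f x * f (s • x) ∂μ := by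
  have hsum : Integrable (fun x => c * ∑ s ∈ S, f x * f (s • x)) μ :=
    (integrable_finsetSum S hfS).const_mul c
  rw [← integral_finsetSum S hfS, ← integral_const_mul, ← integral_sub hf hsum]
  congr 1 with x
  rw [← mul_sum]; ring

section IndicatorProd

variable {α X : Type*} (T : Finset α)

noncomputable def indicatorProd (g : X → ℝ) (p : α × X) : ℝ :=
  (T : Set α).indicator 1 p.1 * g p.2

lemma indicatorProd_sq (g : X → ℝ) (p : α × X) :
    indicatorProd T g p ^ 2 = (T : Set α).indicator 1 p.1 * g p.2 ^ 2 := by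
  by_cases hp : p.1 ∈ T <;> simp [indicatorProd, hp]

lemma indicatorProd_mul_smul {Γ : Type*} [SMul Γ α] [SMul Γ X] [DecidableEq α] (g : X → ℝ)
    (s : Γ) (p : α × X) :
    indicatorProd T g p * indicatorProd T g (s • p)
      = (({a ∈ T | s • a ∈ T} : Finset α) : Set α).indicator 1 p.1 * (g p.2 * g (s • p.2)) := by
  by_cases hp : p.1 ∈ T <;> by_cases hsp : s • p.1 ∈ T <;> simp [indicatorProd, hp, hsp]

end IndicatorProd

section CountProd

variable {α X : Type*} [MeasurableSpace α] [MeasurableSingletonClass α] [MeasurableSpace X]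
  {μ : Measure X} (T : Finset α)

lemma integrable_count_indicator_one :
    Integrable ((T : Set α).indicator (1 : α → ℝ)) (Measure.count : Measure α) :=
  integrable_count_iff.2 <| summable_of_ne_finset_zero (s := T) fun _ ha => by simp [ha]

lemma integral_count_indicator_one :
    ∫ a, (T : Set α).indicator (1 : α → ℝ) a ∂(Measure.count : Measure α) = #T := by
  rw [integral_indicator_one T.measurableSet, measureReal_def, Measure.count_apply_finset]
  simp

lemma integrable_count_prod_indicator_mul {h : X → ℝ} (hh : Integrable h μ) :
    Integrable (fun p : α × X => (T : Set α).indicator (1 : α → ℝ) p.1 * h p.2)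
      (Measure.count.prod μ) :=
  (integrable_count_indicator_one T).mul_prod hh

variable [Countable α] [SFinite μ]

lemma integral_count_prod_indicator_mul (h : X → ℝ) :
    ∫ p : α × X, (T : Set α).indicator (1 : α → ℝ) p.1 * h p.2 ∂(Measure.count.prod μ)
      = #T * ∫ x, h x ∂μ := by
  rw [integral_prod_mul _ h, integral_count_indicator_one]

lemma integral_indicatorProd_sq (g : X → ℝ) :
    ∫ p, indicatorProd T g p ^ 2 ∂(Measure.count.prod μ) = #T * ∫ x, g x ^ 2 ∂μ := by
  simp_rw [indicatorProd_sq]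
  exact integral_count_prod_indicator_mul T fun x => g x ^ 2

lemma integral_indicatorProd_energy {Γ : Type*} [SMul Γ α] [SMul Γ X] [DecidableEq α]
    (S : Finset Γ) (c : ℝ) {g : X → ℝ} (hg : Integrable (fun x => g x ^ 2) μ)
    (hgS : ∀ s ∈ S, Integrable (fun x => g x * g (s • x)) μ) :
    ∫ p, indicatorProd T g p * (indicatorProd T g p - c * ∑ s ∈ S, indicatorProd T g (s • p))
        ∂(Measure.count.prod μ)
      = #T * ∫ x, g x ^ 2 ∂μ
        - c * ∑ s ∈ S, (#{a ∈ T | s • a ∈ T} : ℝ) * ∫ x, g x * g (s • x) ∂μ := by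
  have hsq : Integrable (fun p => indicatorProd T g p ^ 2) (Measure.count.prod μ) := by
    simp_rw [indicatorProd_sq]
    exact integrable_count_prod_indicator_mul T hg
  have hmul : ∀ s ∈ S, Integrable (fun p => indicatorProd T g p * indicatorProd T g (s • p))
      (Measure.count.prod μ) := fun s hs => by
    simp_rw [indicatorProd_mul_smul]
    exact integrable_count_prod_indicator_mul _ (hgS s hs)
  rw [integral_mul_sub_smul_sum S c hsq hmul, integral_indicatorProd_sq]
  congr 2
  refine sum_congr rfl fun s _ => ?_
  simp_rw [indicatorProd_mul_smul]
  exact integral_count_prod_indicator_mul _ fun x => g x * g (s • x)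

end CountProd

open Classical in
theorem product_test_function_estimate_general
    {Γ X₂ : Type*} [Group Γ] [Countable Γ] (H₁ : Subgroup Γ)
    [MeasurableSpace X₂] [MulAction Γ X₂]
    (ν₂ : Measure X₂) [IsProbabilityMeasure ν₂]
    (hmp : ∀ γ : Γ, MeasurePreserving (fun x : X₂ => γ • x) ν₂ ν₂)
    (S : Finset Γ)
    (ε lam : ℝ)
    (F : Finset (Γ ⧸ H₁))
    (hF : ((((S : Set Γ) • (F : Set (Γ ⧸ H₁))) \ (F : Set (Γ ⧸ H₁))).ncard : ℝ)
        ≤ ε * F.card)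
    (f₂ : X₂ → ℝ) (hf₂2 : MemLp f₂ 2 ν₂) (hf₂pos : 0 ≤ f₂)
    (hf₂ : ∫ x, f₂ x * (f₂ x - (S.card : ℝ)⁻¹ * ∑ s ∈ S, f₂ (s • x)) ∂ν₂ ≤
      (1 - lam + ε) * ∫ x, (f₂ x) ^ 2 ∂ν₂) :
    letI : MeasurableSpace (Γ ⧸ H₁) := ⊤
    let f : (Γ ⧸ H₁) × X₂ → ℝ := fun p => (if p.1 ∈ F then (1 : ℝ) else 0) * f₂ p.2
    ∫ p, f p * (f p - (S.card : ℝ)⁻¹ * ∑ s ∈ S, f (s • p))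
        ∂(Measure.count.prod ν₂) ≤
      (1 - lam + ε + S.card * ε) * ∫ p, (f p) ^ 2 ∂(Measure.count.prod ν₂) := by
  let : MeasurableSpace (Γ ⧸ H₁) := ⊤
  intro f
  have : MeasurableSingletonClass (Γ ⧸ H₁) := ⟨fun _ => trivial⟩
  have : Countable (Γ ⧸ H₁) := Quotient.countable
  have hf : f = indicatorProd F f₂ := by
    ext p; by_cases hp : p.1 ∈ F <;> simp [f, indicatorProd, hp]
  have hB : ∀ s ∈ S, Integrable (fun x => f₂ x * f₂ (s • x)) ν₂ :=
    fun s _ => integrable_mul_comp (hmp s) hf₂2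
  rw [hf, integral_indicatorProd_energy F S _ hf₂2.integrable_sq hB, integral_indicatorProd_sq]
  rw [integral_mul_sub_smul_sum S _ hf₂2.integrable_sq hB] at hf₂
  set A := ∫ x, f₂ x ^ 2 ∂ν₂
  set B : Γ → ℝ := fun s => ∫ x, f₂ x * f₂ (s • x) ∂ν₂
  set Q := (#S : ℝ)⁻¹ * ∑ s ∈ S, B s
  set m := #(smulInterior S F)
  have hB_nonneg : ∀ s ∈ S, 0 ≤ B s :=
    fun s _ => integral_nonneg fun x => mul_nonneg (hf₂pos x) (hf₂pos _)
  have hA : 0 ≤ A := integral_nonneg fun _ => sq_nonneg _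
  have hQA : Q ≤ A := inv_card_mul_sum_integral_mul_smul_le S (fun s _ => hmp s) hf₂2
  have hinterior : m * Q ≤ (#S : ℝ)⁻¹ * ∑ s ∈ S, (#{a ∈ F | s • a ∈ F} : ℝ) * B s := by
    rw [mul_left_comm]
    exact mul_le_mul_of_nonneg_left (card_smulInterior_mul_sum_le S F hB_nonneg) (by positivity)
  have hm : (m : ℝ) ≤ #F := by exact_mod_cast card_le_card (smulInterior_subset S F)
  have hboundary : (#F : ℝ) - m ≤ #S * ε * #F := by
    rw [mul_assoc]
    exact (card_sub_card_smulInterior_le S F).trans (by gcongr)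
  calc (#F : ℝ) * A - (#S : ℝ)⁻¹ * ∑ s ∈ S, (#{a ∈ F | s • a ∈ F} : ℝ) * B s
      ≤ #F * (A - Q) + (#F - m) * Q := by linarith
    _ ≤ #F * ((1 - lam + ε) * A) + (#F - m) * A := by gcongr
    _ ≤ #F * ((1 - lam + ε) * A) + (#S * ε * #F) * A := by gcongr
    _ = (1 - lam + ε + #S * ε) * (#F * A) := by ring

open Classical in
/-- If `F` is an `ε`-Følner set in the Schreier graph of `X₁ = Γ/H₁`
(with counting measure) and `f₂ ∈ L²(X₂, ν₂)` is nonnegative with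
`⟨(I-M)f₂, f₂⟩ ≤ (1-λ+ε)‖f₂‖²` for a p.m.p. action on `(X₂, ν₂)`, then
`f = 𝟙_F ⊗ f₂` satisfies `⟨(I-M)f, f⟩ ≤ (1-λ+ε+|S|ε)‖f‖²` for the diagonal action on
the product measure space. -/
theorem product_test_function_estimate
    {Γ X₂ : Type*} [Group Γ] [Countable Γ] (H₁ : Subgroup Γ)
    [MeasurableSpace X₂] [MulAction Γ X₂]
    (ν₂ : Measure X₂) [IsProbabilityMeasure ν₂]
    (hmp : ∀ γ : Γ, MeasurePreserving (fun x : X₂ => γ • x) ν₂ ν₂)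
    (S : Finset Γ) (hSne : S.Nonempty) (hSsym : ∀ s ∈ S, s⁻¹ ∈ S)
    (hgen : Subgroup.closure (S : Set Γ) = ⊤)
    (ε lam : ℝ) (hε : 0 < ε)
    (F : Finset (Γ ⧸ H₁)) (hFne : F.Nonempty)
    (hF : ((((S : Set Γ) • (F : Set (Γ ⧸ H₁))) \ (F : Set (Γ ⧸ H₁))).ncard : ℝ)
        ≤ ε * F.card)
    (f₂ : X₂ → ℝ) (hf₂m : Measurable f₂) (hf₂2 : MemLp f₂ 2 ν₂) (hf₂pos : 0 ≤ f₂)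
    (hf₂ : ∫ x, f₂ x * (f₂ x - (S.card : ℝ)⁻¹ * ∑ s ∈ S, f₂ (s • x)) ∂ν₂ ≤
      (1 - lam + ε) * ∫ x, (f₂ x) ^ 2 ∂ν₂) :
    letI : MeasurableSpace (Γ ⧸ H₁) := ⊤
    let f : (Γ ⧸ H₁) × X₂ → ℝ := fun p => (if p.1 ∈ F then (1 : ℝ) else 0) * f₂ p.2
    ∫ p, f p * (f p - (S.card : ℝ)⁻¹ * ∑ s ∈ S, f (s • p))
        ∂(Measure.count.prod ν₂) ≤
      (1 - lam + ε + S.card * ε) * ∫ p, (f p) ^ 2 ∂(Measure.count.prod ν₂) :=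
  product_test_function_estimate_general H₁ ν₂ hmp S ε lam F hF f₂ hf₂2 hf₂pos hf₂
end
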